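/- Let f : ℂ → ℂ be an entire function (differentiable on all of ℂ), let t > 0 be real, and let M ∈ [0,∞]. Suppose that for every a ∈ ℂ, ∑_{z : f(z) = a} (f^×(z))^{−t} ≤ M, the sum being taken in [0,∞] with the convention 1/0 = ∞. Then for every integer n ≥ 1 and every a ∈ ℂ, ∑_{z : f^n(z) = a} ((f^n)^×(z))^{−t} ≤ M^n. -/

import Mathlib

open scoped ENNReal

/-- The spherical derivative `h^×(z) = |h′(z)|·(1+|z|²)/(1+|h(z)|²)` of an entire
function `h` at `z`. -/
noncomputable def sphDeriv (h : ℂ → ℂ) (z : ℂ) : ℝ :=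
  ‖deriv h z‖ * (1 + ‖z‖ ^ 2) / (1 + ‖h z‖ ^ 2)

/-- The Perron–Frobenius–Ruelle fiber sum `∑_{z : f^k(z) = b} ((f^k)^×(z))^{−t}`,
taken in `[0,∞]` with the convention `0^(−t) = ∞` for `t > 0`. -/
noncomputable def fiberSum (f : ℂ → ℂ) (k : ℕ) (t : ℝ) (b : ℂ) : ℝ≥0∞ :=
  ∑' z : {z : ℂ // f^[k] z = b}, (ENNReal.ofReal (sphDeriv f^[k] z)) ^ (-t)

/-!
The spherical derivative obeys the chain rule `(g ∘ h)^×(z) = g^×(h z) · h^×(z)`, because the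
factors `1 + |h z|²` cancel. Splitting the fiber of `f^[k+1] = f ∘ f^[k]` over `a` along the
fiber of `f` over `a` therefore gives
`fiberSum f (k+1) t a = ∑_{f w = a} (f^×(w))^{−t} · fiberSum f k t w ≤ M · sup_w fiberSum f k t w`,
and induction from `fiberSum f 0 t a = 1` yields the bound `Mⁿ`.
-/

def fiberCompEquiv {α β γ : Type*} (g : β → γ) (h : α → β) (a : γ) :
    {z // g (h z) = a} ≃ Σ w : {w // g w = a}, {z // h z = w.1} where
  toFun z := ⟨⟨h z, z.2⟩, ⟨z, rfl⟩⟩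
  invFun p := ⟨p.2, by rw [p.2.2, p.1.2]⟩
  left_inv _ := rfl
  right_inv := by
    rintro ⟨⟨w, hw⟩, z, hz⟩
    dsimp only at hz
    subst hz
    rfl

lemma sphDeriv_nonneg (h : ℂ → ℂ) (z : ℂ) : 0 ≤ sphDeriv h z := by
  unfold sphDeriv; positivity

lemma sphDeriv_id (z : ℂ) : sphDeriv id z = 1 := by
  have : (0 : ℝ) < 1 + ‖z‖ ^ 2 := by positivity
  simp only [sphDeriv, deriv_id, norm_one, one_mul, id]
  exact div_self this.ne'

lemma sphDeriv_comp {g h : ℂ → ℂ} {z : ℂ} (hg : DifferentiableAt ℂ g (h z))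
    (hh : DifferentiableAt ℂ h z) :
    sphDeriv (g ∘ h) z = sphDeriv g (h z) * sphDeriv h z := by
  have : (0 : ℝ) < 1 + ‖h z‖ ^ 2 := by positivity
  simp only [sphDeriv, deriv_comp z hg hh, norm_mul, Function.comp_apply]
  field_simp

lemma tsum_fiber_comp_sphDeriv_rpow {g h : ℂ → ℂ} (hg : Differentiable ℂ g)
    (hh : Differentiable ℂ h) (t : ℝ) (a : ℂ) :
    ∑' z : {z // g (h z) = a}, ENNReal.ofReal (sphDeriv (g ∘ h) z) ^ (-t) =
      ∑' w : {w // g w = a}, ENNReal.ofReal (sphDeriv g w) ^ (-t) *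
        ∑' z : {z // h z = w.1}, ENNReal.ofReal (sphDeriv h z) ^ (-t) := by
  rw [← (fiberCompEquiv g h a).symm.tsum_eq, ENNReal.tsum_sigma']
  refine tsum_congr fun w => ?_
  rw [← ENNReal.tsum_mul_left]
  refine tsum_congr fun ⟨z, hz⟩ => ?_
  change ENNReal.ofReal (sphDeriv (g ∘ h) z) ^ (-t) = _
  rw [sphDeriv_comp hg.differentiableAt hh.differentiableAt, hz,
    ENNReal.ofReal_mul (sphDeriv_nonneg g w),
    ENNReal.mul_rpow_of_ne_top ENNReal.ofReal_ne_top ENNReal.ofReal_ne_top]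

lemma fiberSum_zero (f : ℂ → ℂ) (t : ℝ) (a : ℂ) : fiberSum f 0 t a = 1 := by
  have : Unique {z : ℂ // f^[0] z = a} := ⟨⟨⟨a, rfl⟩⟩, fun z => Subtype.ext z.2⟩
  simp [fiberSum, sphDeriv_id]

lemma fiberSum_succ {f : ℂ → ℂ} (hf : Differentiable ℂ f) (k : ℕ) (t : ℝ) (a : ℂ) :
    fiberSum f (k + 1) t a =
      ∑' w : {w // f w = a}, ENNReal.ofReal (sphDeriv f w) ^ (-t) * fiberSum f k t w := by
  simp only [fiberSum]
  rw [Function.iterate_succ']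
  exact tsum_fiber_comp_sphDeriv_rpow hf (hf.iterate k) t a

lemma fiberSum_succ_le_mul {f : ℂ → ℂ} (hf : Differentiable ℂ f) {k : ℕ} {t : ℝ} {C : ℝ≥0∞}
    (hC : ∀ w, fiberSum f k t w ≤ C) (a : ℂ) :
    fiberSum f (k + 1) t a ≤ fiberSum f 1 t a * C := by
  calc fiberSum f (k + 1) t a
      ≤ ∑' w : {w // f w = a}, ENNReal.ofReal (sphDeriv f w) ^ (-t) * C := by
        rw [fiberSum_succ hf]
        exact ENNReal.tsum_le_tsum fun w => mul_le_mul_right (hC w) _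
    _ = fiberSum f 1 t a * C := by
        rw [ENNReal.tsum_mul_right, fiberSum, Function.iterate_one]

theorem fiberSum_iterate_le_pow_general (f : ℂ → ℂ) (hf : Differentiable ℂ f)
    (t : ℝ) (M : ℝ≥0∞) (hM : ∀ a : ℂ, fiberSum f 1 t a ≤ M) :
    ∀ n : ℕ, 1 ≤ n → ∀ a : ℂ, fiberSum f n t a ≤ M ^ n := by
  suffices ∀ n : ℕ, ∀ a : ℂ, fiberSum f n t a ≤ M ^ n from fun n _ => this n
  intro n
  induction n with
  | zero => simp [fiberSum_zero]
  | succ k ih =>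
    intro a
    calc fiberSum f (k + 1) t a ≤ fiberSum f 1 t a * M ^ k := fiberSum_succ_le_mul hf ih a
      _ ≤ M ^ (k + 1) := by rw [pow_succ']; gcongr; exact hM a

/-- Lemma 3.5(iv), for entire `f`: if `∑_{f(z)=a} (f^×(z))^{−t} ≤ M` for every `a`, then
`∑_{f^n(z)=a} ((f^n)^×(z))^{−t} ≤ Mⁿ` for every `n ≥ 1` and every `a`. -/
theorem fiberSum_iterate_le_pow (f : ℂ → ℂ) (hf : Differentiable ℂ f)
    (t : ℝ) (ht : 0 < t) (M : ℝ≥0∞) (hM : ∀ a : ℂ, fiberSum f 1 t a ≤ M) :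
    ∀ n : ℕ, 1 ≤ n → ∀ a : ℂ, fiberSum f n t a ≤ M ^ n :=
  fiberSum_iterate_le_pow_general f hf t M hM
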